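/- Pairwise reduction: with the setup of the previous statement, the K-measure minimax equals the maximum of the two-measure minimaxes, i.e., min_{μ} max_{1≤i≤K} f_i(μ) = max_{1≤i<j≤K} ( min_{μ} max{f_i(μ), f_j(μ)} ). -/

import Mathlib

/-!
Sublevel sets of the parabolas `f_i` are intervals, and by Helly's theorem on the line a finite
family of intervals has a common point as soon as any two of its members meet. Hence if every pair
`f_i, f_j` dips below a level `t` at a common point, all the `f_i` do, so the `K`-fold minimax is at
most the largest pairwise minimax; the reverse inequality holds pointwise.
-/

open Set Finset

section PairwiseMinimax

variable {ι : Type*} [Fintype ι] {f : ι → ℝ → ℝ}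

theorem exists_forall_le_of_forall_ne_exists_le [Nontrivial ι]
    (hf : ∀ i, QuasiconvexOn ℝ univ (f i)) {t : ℝ}
    (ht : ∀ i j, i ≠ j → ∃ x, f i x ≤ t ∧ f j x ≤ t) :
    ∃ x, ∀ i, f i x ≤ t := by
  classical
  have hcard : Module.finrank ℝ ℝ + 1 ≤ #(univ : Finset ι) := by
    rw [Module.finrank_self, card_univ]
    exact Fintype.one_lt_card
  have hconvex (i : ι) : Convex ℝ {x | f i x ≤ t} := by simpa using hf i t
  obtain ⟨x, hx⟩ := Convex.helly_theorem (F := fun i => {x | f i x ≤ t}) hcard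
      (fun i _ => hconvex i) fun I _ hI => by
    obtain ⟨i, j, hij, rfl⟩ := card_eq_two.1 (by simpa using hI)
    obtain ⟨x, hi, hj⟩ := ht i j hij
    exact ⟨x, by simp [hi, hj]⟩
  exact ⟨x, by simpa using hx⟩

variable [LinearOrder ι]

theorem ciInf_ciSup_eq_sup'_ciInf_max (hf : ∀ i, QuasiconvexOn ℝ univ (f i))
    (hbdd : ∀ i, BddBelow (range (f i)))
    (hpairs : (univ.filter fun p : ι × ι => p.1 < p.2).Nonempty) :
    ⨅ x, ⨆ i, f i x =
      (univ.filter fun p : ι × ι => p.1 < p.2).sup' hpairs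
        fun p => ⨅ x, max (f p.1 x) (f p.2 x) := by
  obtain ⟨⟨i₀, j₀⟩, hij₀⟩ := hpairs
  have le_sup (x : ℝ) (i : ι) : f i x ≤ ⨆ i, f i x :=
    le_ciSup (f := (f · x)) (Finite.bddAbove_range _) i
  have hbdd_max (i j : ι) : BddBelow (range fun x => max (f i x) (f j x)) :=
    (hbdd i).range_mono _ fun x => le_max_left _ _
  have hbdd_sup : BddBelow (range fun x => ⨆ i, f i x) :=
    (hbdd i₀).range_mono _ (le_sup · i₀)
  refine le_antisymm (le_of_forall_gt_imp_ge_of_dense fun t ht => ?_) ?_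
  · have : Nontrivial ι := ⟨i₀, j₀, (by simpa using hij₀ : i₀ < j₀).ne⟩
    obtain ⟨x, hx⟩ := exists_forall_le_of_forall_ne_exists_le hf (t := t) fun i j hij => by
      wlog hlt : i < j generalizing i j
      · exact (this j i hij.symm (hij.lt_or_gt.resolve_left hlt)).imp fun _ => And.symm
      have hpair : ⨅ x, max (f i x) (f j x) < t :=
        (le_sup' (fun p : ι × ι => ⨅ x, max (f p.1 x) (f p.2 x))
          (by simpa using hlt : (i, j) ∈ univ.filter fun p : ι × ι => p.1 < p.2)).trans_lt ht
      obtain ⟨x, hx⟩ := exists_lt_of_ciInf_lt hpair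
      exact ⟨x, (le_max_left _ _).trans hx.le, (le_max_right _ _).trans hx.le⟩
    exact (ciInf_le hbdd_sup x).trans (ciSup_le hx)
  · exact sup'_le _ _ fun p _ =>
      ciInf_mono (hbdd_max p.1 p.2) fun x => max_le (le_sup x p.1) (le_sup x p.2)

end PairwiseMinimax

theorem convexOn_sq_sub_mul_add (a b : ℝ) : ConvexOn ℝ univ fun x : ℝ => x ^ 2 - a * x + b :=
  ((Even.convexOn_pow even_two).sub ((LinearMap.mul ℝ ℝ a).concaveOn convex_univ)).add_const b

theorem bddBelow_range_sq_sub_mul_add (a b : ℝ) :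
    BddBelow (range fun x : ℝ => x ^ 2 - a * x + b) :=
  ⟨b - a ^ 2 / 4, by rintro _ ⟨x, rfl⟩; nlinarith [sq_nonneg (x - a / 2)]⟩

/-- Pairwise reduction: the `K`-parabola minimax equals the maximum over pairs `i < j` of the
two-parabola minimaxes: `min_μ max_k f_k(μ) = max_{i<j} min_μ max{f_i(μ), f_j(μ)}`. -/
theorem upper_variance_stmt10
    {K : ℕ} (hK : 2 ≤ K) (μ κ : Fin K → ℝ) :
    (⨅ x : ℝ, ⨆ i, (x ^ 2 - 2 * μ i * x + κ i))
      = (Finset.univ.filter fun p : Fin K × Fin K => p.1 < p.2).sup'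
          ⟨(⟨0, by omega⟩, ⟨1, by omega⟩), by
            exact Finset.mem_filter.mpr ⟨Finset.mem_univ _, Fin.mk_lt_mk.mpr (by omega)⟩⟩
          (fun p => ⨅ x : ℝ,
            max (x ^ 2 - 2 * μ p.1 * x + κ p.1) (x ^ 2 - 2 * μ p.2 * x + κ p.2)) :=
  ciInf_ciSup_eq_sup'_ciInf_max (f := fun i x => x ^ 2 - 2 * μ i * x + κ i)
    (fun _ => (convexOn_sq_sub_mul_add _ _).quasiconvexOn)
    (fun _ => bddBelow_range_sq_sub_mul_add _ _) _
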